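/- arXiv:1005.3454 — 3 statements merged into one kernel-verified Lean document; each statement's English description precedes it below -/
import Mathlib

section
/- Let $E=(\alpha,\beta)$ be a bounded interval and let $c:(\alpha,\beta)\to(0,\infty)$ be continuous. Let $\eta\in C^2(\alpha,\beta)$ be strictly positive and strictly concave. If $\int_\alpha^{a}\frac{(x-\alpha)^2}{c(x)}dx = \infty$ for some $a\in(\alpha,\beta)$, then $\inf_{x\in(\alpha,\beta)} \frac{-c(x)\eta''(x)}{2\eta(x)} = 0$. -/
/-!
Suppose `-c η'' / (2η) ≥ ε > 0` on `(α, β)`. Concavity and positivity of `η` give the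
tangent bound `η'(x) (x - α) ≤ η(x)`, so `F = η - (x - α) η'` is nonnegative and
`η(x) / (x - α)` is decreasing, whence `η(x) ≥ K (x - α)` on `(α, a]` with
`K = η(a) / (a - α)`. Then `2 ε K (x - α)² / c(x) ≤ -(x - α) η''(x) = F'(x)`, so the
integrals of `(x - α)² / c` over `(t, a]` stay below `F(a) / (2 ε K)` as `t → α`, and
`(x - α)² / c` would be integrable on `(α, a)`.
-/

open Set MeasureTheory Filter Topology

lemma ConcaveOn.mul_sub_le_of_hasDerivAt {f : ℝ → ℝ} {α β t f' : ℝ}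
    (hfc : ConcaveOn ℝ (Ioo α β) f) (hf0 : ∀ x ∈ Ioo α β, 0 ≤ f x)
    (ht : t ∈ Ioo α β) (hf' : HasDerivAt f f' t) : f' * (t - α) ≤ f t := by
  have hsecant : ∀ s ∈ Ioo α t, f' * (t - s) ≤ f t := fun s hs => by
    have hs' : s ∈ Ioo α β := ⟨hs.1, hs.2.trans ht.2⟩
    have hslope := hfc.le_slope_of_hasDerivAt hs' ht hs.2 hf'
    rw [slope_def_field, le_div_iff₀ (sub_pos.2 hs.2)] at hslope
    linarith [hf0 s hs']
  have hlim : Tendsto (fun s => f' * (t - s)) (𝓝[>] α) (𝓝 (f' * (t - α))) :=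
    ((Continuous.tendsto (by fun_prop) α)).mono_left nhdsWithin_le_nhds
  exact le_of_tendsto hlim (eventually_of_mem (Ioo_mem_nhdsGT ht.1) hsecant)

lemma antitoneOn_div_sub_of_mul_sub_le {f f' : ℝ → ℝ} {α β : ℝ}
    (hf : ∀ x ∈ Ioo α β, HasDerivAt f (f' x) x)
    (hf'α : ∀ x ∈ Ioo α β, f' x * (x - α) ≤ f x) :
    AntitoneOn (fun x => f x / (x - α)) (Ioo α β) := by
  have hderiv : ∀ x ∈ Ioo α β, HasDerivAt (fun x => f x / (x - α))
      ((f' x * (x - α) - f x * 1) / (x - α) ^ 2) x :=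
    fun x hx => (hf x hx).div ((hasDerivAt_id' x).sub_const α) (sub_pos.2 hx.1).ne'
  refine antitoneOn_of_deriv_nonpos (convex_Ioo α β)
    (fun x hx => (hderiv x hx).continuousAt.continuousWithinAt) ?_ ?_ <;> rw [interior_Ioo]
  · exact fun x hx => (hderiv x hx).differentiableAt.differentiableWithinAt
  · intro x hx
    rw [(hderiv x hx).deriv]
    exact div_nonpos_of_nonpos_of_nonneg (by linarith [hf'α x hx]) (sq_nonneg _)

lemma integrableOn_Ioc_of_le_deriv_of_bddBelow {f F F' : ℝ → ℝ} {a b m : ℝ} (hab : a < b)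
    (hf : ContinuousOn f (Ioc a b)) (hf0 : ∀ x ∈ Ioc a b, 0 ≤ f x)
    (hF : ∀ x ∈ Ioc a b, HasDerivAt F (F' x) x) (hFm : ∀ x ∈ Ioc a b, m ≤ F x)
    (hfF : ∀ x ∈ Ioo a b, f x ≤ F' x) : IntegrableOn f (Ioc a b) := by
  obtain ⟨u, -, hu, hlim⟩ := exists_seq_strictAnti_tendsto' hab
  have hsub : ∀ n, Icc (u n) b ⊆ Ioc a b := fun n x hx => ⟨(hu n).1.trans_le hx.1, hx.2⟩
  have hfi : ∀ n, IntegrableOn f (Icc (u n) b) := fun n =>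
    ((hf.mono (hsub n)).integrableOn_compact isCompact_Icc)
  refine integrableOn_Ioc_of_intervalIntegral_norm_bounded_left (I := F b - m)
    (fun n => (hfi n).mono_set Ioc_subset_Icc_self) hlim (Eventually.of_forall fun n => ?_)
  have hFTC : ∫ x in u n..b, f x ≤ F b - F (u n) :=
    intervalIntegral.integral_le_sub_of_hasDeriv_right_of_le (hu n).2.le
      (fun x hx => (hF x (hsub n hx)).continuousAt.continuousWithinAt)
      (fun x hx => (hF x (hsub n (Ioo_subset_Icc_self hx))).hasDerivWithinAt) (hfi n)
      (fun x hx => hfF x ⟨(hu n).1.trans hx.1, hx.2⟩)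
  rw [intervalIntegral.integral_of_le (hu n).2.le] at hFTC
  rw [setIntegral_congr_fun measurableSet_Ioc
    fun x hx => Real.norm_of_nonneg (hf0 x (hsub n (Ioc_subset_Icc_self hx)))]
  linarith [hFm (u n) (hsub n ⟨le_rfl, (hu n).2.le⟩)]

lemma integrableOn_sq_div_of_two_mul_le_neg_mul_deriv2 {α β a ε : ℝ}
    {c η η' η'' : ℝ → ℝ}
    (hc_pos : ∀ x ∈ Ioo α β, 0 < c x) (hc_cont : ContinuousOn c (Ioo α β))
    (hη' : ∀ x ∈ Ioo α β, HasDerivAt η (η' x) x)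
    (hη'' : ∀ x ∈ Ioo α β, HasDerivAt η' (η'' x) x)
    (hη_pos : ∀ x ∈ Ioo α β, 0 < η x) (hconc : ∀ x ∈ Ioo α β, η'' x ≤ 0)
    (ha : a ∈ Ioo α β) (hε : 0 < ε)
    (hbound : ∀ x ∈ Ioo α β, 2 * ε * η x ≤ -c x * η'' x) :
    IntegrableOn (fun x => (x - α) ^ 2 / c x) (Ioc α a) := by
  have hsub : Ioc α a ⊆ Ioo α β := fun x hx => ⟨hx.1, hx.2.trans_lt ha.2⟩
  have hconcave : ConcaveOn ℝ (Ioo α β) η := by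
    refine concaveOn_of_hasDerivWithinAt2_nonpos (f' := η') (f'' := η'') (convex_Ioo α β)
      (fun x hx => (hη' x hx).continuousAt.continuousWithinAt) ?_ ?_ ?_ <;> rw [interior_Ioo]
    · exact fun x hx => (hη' x hx).hasDerivWithinAt
    · exact fun x hx => (hη'' x hx).hasDerivWithinAt
    · exact hconc
  have htangent : ∀ x ∈ Ioo α β, η' x * (x - α) ≤ η x := fun x hx =>
    hconcave.mul_sub_le_of_hasDerivAt (fun y hy => (hη_pos y hy).le) hx (hη' x hx)
  set K := η a / (a - α)
  have hlinear : ∀ x ∈ Ioc α a, K * (x - α) ≤ η x := fun x hx => by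
    have := antitoneOn_div_sub_of_mul_sub_le hη' htangent (hsub hx) ha hx.2
    rwa [le_div_iff₀ (sub_pos.2 hx.1)] at this
  have hκ : 0 < 2 * ε * K := mul_pos (by positivity) (div_pos (hη_pos a ha) (sub_pos.2 ha.1))
  refine integrableOn_Ioc_of_le_deriv_of_bddBelow (m := 0)
    (F := fun x => (η x - (x - α) * η' x) / (2 * ε * K))
    (F' := fun x => -(x - α) * η'' x / (2 * ε * K)) ha.1 ?_ ?_ ?_ ?_ ?_
  · exact ((continuousOn_id.sub continuousOn_const).pow 2).div (hc_cont.mono hsub)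
      fun x hx => (hc_pos x (hsub hx)).ne'
  · intro x hx
    have := hc_pos x (hsub hx)
    positivity
  · intro x hx
    have hF := (hη' x (hsub hx)).sub (((hasDerivAt_id' x).sub_const α).mul (hη'' x (hsub hx)))
    exact (hF.div_const (2 * ε * K)).congr_deriv (by ring)
  · exact fun x hx => div_nonneg (by linarith [htangent x (hsub hx)]) hκ.le
  · intro x hx
    have hx' := hsub (Ioo_subset_Ioc_self hx)
    have hxα : 0 ≤ x - α := (sub_pos.2 hx.1).le
    rw [div_le_div_iff₀ (hc_pos x hx') hκ]
    calc (x - α) ^ 2 * (2 * ε * K) = 2 * ε * (x - α) * (K * (x - α)) := by ring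
      _ ≤ 2 * ε * (x - α) * η x := by
        gcongr
        exact hlinear x (Ioo_subset_Ioc_self hx)
      _ = (x - α) * (2 * ε * η x) := by ring
      _ ≤ (x - α) * (-c x * η'' x) := mul_le_mul_of_nonneg_left (hbound x hx') hxα
      _ = -(x - α) * η'' x * c x := by ring

theorem stmt0_general (α β : ℝ) (c η η' η'' : ℝ → ℝ)
    (hc_pos : ∀ x ∈ Ioo α β, 0 < c x) (hc_cont : ContinuousOn c (Ioo α β))
    (hη' : ∀ x ∈ Ioo α β, HasDerivAt η (η' x) x)
    (hη'' : ∀ x ∈ Ioo α β, HasDerivAt η' (η'' x) x)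
    (hη_pos : ∀ x ∈ Ioo α β, 0 < η x)
    (hconc : ∀ x ∈ Ioo α β, η'' x < 0)
    (a : ℝ) (ha : a ∈ Ioo α β)
    (hint : ¬ IntegrableOn (fun x => (x - α) ^ 2 / c x) (Ioo α a)) :
    sInf ((fun x => -c x * η'' x / (2 * η x)) '' Ioo α β) = 0 := by
  set S := (fun x => -c x * η'' x / (2 * η x)) '' Ioo α β
  have hS0 : ∀ y ∈ S, 0 ≤ y := by
    rintro _ ⟨x, hx, rfl⟩
    exact div_nonneg (mul_nonneg_of_nonpos_of_nonpos (neg_nonpos.2 (hc_pos x hx).le)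
      (hconc x hx).le) (by linarith [hη_pos x hx])
  refine le_antisymm (not_lt.1 fun hpos => hint ?_) (le_csInf ⟨_, mem_image_of_mem _ ha⟩ hS0)
  have hbound : ∀ x ∈ Ioo α β, 2 * sInf S * η x ≤ -c x * η'' x := fun x hx => by
    have := csInf_le ⟨0, hS0⟩ (mem_image_of_mem (fun x => -c x * η'' x / (2 * η x)) hx)
    rw [le_div_iff₀ (by linarith [hη_pos x hx])] at this
    linarith
  exact (integrableOn_sq_div_of_two_mul_le_neg_mul_deriv2 hc_pos hc_cont hη' hη'' hη_pos
    (fun x hx => (hconc x hx).le) ha hpos hbound).mono_set Ioo_subset_Ioc_self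

theorem stmt0 (α β : ℝ) (hαβ : α < β) (c η η' η'' : ℝ → ℝ)
    (hc_pos : ∀ x ∈ Ioo α β, 0 < c x) (hc_cont : ContinuousOn c (Ioo α β))
    (hη' : ∀ x ∈ Ioo α β, HasDerivAt η (η' x) x)
    (hη'' : ∀ x ∈ Ioo α β, HasDerivAt η' (η'' x) x)
    (hη_pos : ∀ x ∈ Ioo α β, 0 < η x)
    (hconc : ∀ x ∈ Ioo α β, η'' x < 0)
    (a : ℝ) (ha : a ∈ Ioo α β)
    (hint : ¬ IntegrableOn (fun x => (x - α) ^ 2 / c x) (Ioo α a)) :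
    sInf ((fun x => -c x * η'' x / (2 * η x)) '' Ioo α β) = 0 :=
  stmt0_general α β c η η' η'' hc_pos hc_cont hη' hη'' hη_pos hconc a ha hint
end

section
/- Let $c:(\alpha,\beta)\to(0,\infty)$ satisfy $\lim_{x\downarrow\alpha}\frac{(x-\alpha)^2}{c(x)} = \infty$. Then the generalized principal eigenvalue $\lambda^* := \sup_{\eta\in C^2,\,\eta>0}\inf_{x\in(\alpha,\beta)} \frac{-c(x)\eta''(x)}{2\eta(x)}$ equals $0$. -/
/-!
Suppose some positive `η` had `-c η'' / (2η) ≥ l > 0` on `(α, β)`. Since `(x - α)² / c x → ∞`,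
near `α` this forces `(x - α)² η'' + (5/4) η ≤ 0`, so `η` is a positive supersolution of the Euler
equation `t² u'' + (5/4) u = 0`. That equation has the oscillating solution `u t = √t sin (log t)`
with consecutive zeros accumulating at `0`, and the Wronskian `η' u - η u'` is nonincreasing
between two of them yet goes from negative to positive: a contradiction (Sturm comparison). Hence
every such infimum is `≤ 0`, and `η ≡ 1` attains `0`.
-/

open Set Filter Real

theorem sturm_comparison {a b : ℝ} (hab : a ≤ b) {q u u' u'' η η' η'' : ℝ → ℝ}
    (hu : ∀ x ∈ Icc a b, HasDerivAt u (u' x) x) (hu' : ∀ x ∈ Icc a b, HasDerivAt u' (u'' x) x)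
    (hη : ∀ x ∈ Icc a b, HasDerivAt η (η' x) x) (hη' : ∀ x ∈ Icc a b, HasDerivAt η' (η'' x) x)
    (hu_eq : ∀ x ∈ Icc a b, u'' x = -q x * u x) (hη_le : ∀ x ∈ Icc a b, η'' x ≤ -q x * η x)
    (hu_nonneg : ∀ x ∈ Icc a b, 0 ≤ u x) (hua : u a = 0) (hub : u b = 0)
    (hu'a : 0 < u' a) (hu'b : u' b < 0) (hηa : 0 < η a) (hηb : 0 < η b) : False := by
  set W : ℝ → ℝ := fun x => η' x * u x - η x * u' x
  have hW : ∀ x ∈ Icc a b, HasDerivAt W (u x * (η'' x + q x * η x)) x := fun x hx =>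
    (((hη' x hx).mul (hu x hx)).sub ((hη x hx).mul (hu' x hx))).congr_deriv
      (by rw [hu_eq x hx]; ring)
  have hW_anti : AntitoneOn W (Icc a b) := by
    refine antitoneOn_of_hasDerivWithinAt_nonpos (f' := fun x => u x * (η'' x + q x * η x))
      (convex_Icc a b)
      (fun x hx => (hW x hx).continuousAt.continuousWithinAt) (fun x hx => ?_) (fun x hx => ?_)
    · rw [interior_Icc] at hx ⊢
      exact (hW x (Ioo_subset_Icc_self hx)).hasDerivWithinAt
    · rw [interior_Icc] at hx
      have hx' := Ioo_subset_Icc_self hx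
      exact mul_nonpos_of_nonneg_of_nonpos (hu_nonneg x hx') (by linarith [hη_le x hx'])
  have := hW_anti (left_mem_Icc.2 hab) (right_mem_Icc.2 hab) hab
  simp only [W, hua, hub] at this
  linarith [mul_pos hηa hu'a, mul_pos hηb (neg_pos.2 hu'b)]

/-- A solution of `t² u'' + (5/4) u = 0` on `t > 0`, from the indicial roots `1/2 ± i`. -/
noncomputable def eulerSol (t : ℝ) : ℝ := √t * sin (log t)

noncomputable def eulerSolDeriv (t : ℝ) : ℝ := (sin (log t) / 2 + cos (log t)) / √t

theorem hasDerivAt_eulerSol {t : ℝ} (ht : 0 < t) : HasDerivAt eulerSol (eulerSolDeriv t) t := by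
  have hlog := hasDerivAt_log ht.ne'
  refine (((hasDerivAt_id t).sqrt ht.ne').mul hlog.sin).congr_deriv ?_
  simp only [eulerSolDeriv, id]
  field_simp
  rw [sq_sqrt ht.le]
  ring

theorem hasDerivAt_eulerSolDeriv {t : ℝ} (ht : 0 < t) :
    HasDerivAt eulerSolDeriv (-(5 / (4 * t ^ 2)) * eulerSol t) t := by
  have hs : 0 < √t := sqrt_pos.2 ht
  have hlog := hasDerivAt_log ht.ne'
  refine (((hlog.sin.div_const 2).add hlog.cos).div ((hasDerivAt_id t).sqrt ht.ne')
    hs.ne').congr_deriv ?_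
  simp only [eulerSol, id, Pi.add_apply]
  field_simp
  simp only [show √t ^ 4 = (√t ^ 2) ^ 2 by ring, sq_sqrt ht.le]
  ring

theorem exists_consecutive_zeros_eulerSol {D : ℝ} (hD : 0 < D) :
    ∃ a b, 0 < a ∧ a < b ∧ b < D ∧ eulerSol a = 0 ∧ eulerSol b = 0 ∧
      0 < eulerSolDeriv a ∧ eulerSolDeriv b < 0 ∧ ∀ t ∈ Icc a b, 0 ≤ eulerSol t := by
  obtain ⟨k, hk⟩ := exists_int_lt ((log D - π) / (2 * π))
  have hkD : k * (2 * π) + π < log D := by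
    have := (lt_div_iff₀ (by positivity)).1 hk
    linarith
  have hsin : sin (k * (2 * π)) = 0 := by
    rw [show (k : ℝ) * (2 * π) = (2 * k : ℤ) * π by push_cast; ring]
    exact sin_int_mul_pi _
  refine ⟨exp (k * (2 * π)), exp (k * (2 * π) + π), exp_pos _, exp_lt_exp.2 (by linarith [pi_pos]),
    (lt_log_iff_exp_lt hD).1 hkD, ?_, ?_, ?_, ?_, fun t ht => ?_⟩
  · simp [eulerSol, hsin]
  · simp [eulerSol, sin_add_pi, hsin]
  · simp [eulerSolDeriv, hsin, cos_int_mul_two_pi, exp_pos]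
  · simp [eulerSolDeriv, sin_add_pi, hsin, neg_div, exp_pos]
  · have ht0 : 0 < t := (exp_pos _).trans_le ht.1
    have hlo : k * (2 * π) ≤ log t := (le_log_iff_exp_le ht0).2 ht.1
    have hhi : log t ≤ k * (2 * π) + π := (log_le_iff_le_exp ht0).2 ht.2
    rw [eulerSol, ← sin_sub_int_mul_two_pi (log t) k]
    exact mul_nonneg (sqrt_nonneg t) (sin_nonneg_of_nonneg_of_le_pi (by linarith) (by linarith))

theorem false_of_pos_eulerSupersolution {α D : ℝ} (hαD : α < D) {η η' η'' : ℝ → ℝ}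
    (hη : ∀ x ∈ Ioo α D, HasDerivAt η (η' x) x) (hη' : ∀ x ∈ Ioo α D, HasDerivAt η' (η'' x) x)
    (hη_pos : ∀ x ∈ Ioo α D, 0 < η x)
    (hη_le : ∀ x ∈ Ioo α D, η'' x ≤ -(5 / (4 * (x - α) ^ 2)) * η x) : False := by
  obtain ⟨a, b, ha, hab, hbD, hua, hub, hu'a, hu'b, hu_nonneg⟩ :=
    exists_consecutive_zeros_eulerSol (sub_pos.2 hαD)
  have hmem : ∀ x ∈ Icc (a + α) (b + α), x ∈ Ioo α D := fun x hx =>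
    ⟨by linarith [hx.1], by linarith [hx.2]⟩
  have hpos : ∀ x ∈ Icc (a + α) (b + α), 0 < x - α := fun x hx => sub_pos.2 (hmem x hx).1
  refine sturm_comparison (by linarith) (q := fun x => 5 / (4 * (x - α) ^ 2))
    (u := fun x => eulerSol (x - α)) (u' := fun x => eulerSolDeriv (x - α))
    (u'' := fun x => -(5 / (4 * (x - α) ^ 2)) * eulerSol (x - α))
    (fun x hx => (hasDerivAt_eulerSol (hpos x hx)).comp_sub_const x α)
    (fun x hx => (hasDerivAt_eulerSolDeriv (hpos x hx)).comp_sub_const x α)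
    (fun x hx => hη x (hmem x hx)) (fun x hx => hη' x (hmem x hx)) (fun _ _ => rfl)
    (fun x hx => hη_le x (hmem x hx))
    (fun x hx => hu_nonneg _ ⟨by linarith [hx.1], by linarith [hx.2]⟩)
    (by simpa) (by simpa) (by simpa) (by simpa)
    (hη_pos _ (hmem _ (left_mem_Icc.2 (by linarith))))
    (hη_pos _ (hmem _ (right_mem_Icc.2 (by linarith))))

theorem le_neg_div_mul_of_le_neg_mul_div {l c η η'' t : ℝ} (hl : 0 < l) (hc : 0 < c)
    (hη : 0 < η) (h : l ≤ -c * η'' / (2 * η)) (hct : 5 / (8 * l) ≤ t ^ 2 / c) :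
    η'' ≤ -(5 / (4 * t ^ 2)) * η := by
  rw [le_div_iff₀ (by positivity)] at h
  rw [div_le_div_iff₀ (by positivity) hc] at hct
  have ht : 0 < t ^ 2 := by nlinarith
  have hη'' : 0 < -η'' := by nlinarith
  rw [neg_mul, div_mul_eq_mul_div, le_neg, div_le_iff₀ (by positivity)]
  nlinarith [mul_le_mul_of_nonneg_left hct hη''.le]

theorem sInf_image_le_zero {α β : ℝ} (hαβ : α < β) {c η : ℝ → ℝ}
    (hc_pos : ∀ x ∈ Ioo α β, 0 < c x)
    (hlim : Tendsto (fun x => (x - α) ^ 2 / c x) (nhdsWithin α (Ioi α)) atTop)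
    (hη_pos : ∀ x ∈ Ioo α β, 0 < η x) (hη : ContDiffOn ℝ 2 η (Ioo α β)) :
    sInf ((fun x => -c x * deriv (deriv η) x / (2 * η x)) '' Ioo α β) ≤ 0 := by
  set l := sInf ((fun x => -c x * deriv (deriv η) x / (2 * η x)) '' Ioo α β)
  by_contra! hl
  have hbdd : BddBelow ((fun x => -c x * deriv (deriv η) x / (2 * η x)) '' Ioo α β) := by
    by_contra h
    exact hl.ne' (Real.sInf_of_not_bddBelow h)
  obtain ⟨D, hαD, hD⟩ := mem_nhdsGT_iff_exists_Ioo_subset.1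
    (hlim.eventually (eventually_ge_atTop (5 / (8 * l))))
  have hsub : Ioo α (min D β) ⊆ Ioo α β := Ioo_subset_Ioo_right (min_le_right _ _)
  have hη' : ContDiffOn ℝ 1 (deriv η) (Ioo α β) := hη.deriv_of_isOpen isOpen_Ioo (by norm_num)
  refine false_of_pos_eulerSupersolution (lt_min hαD hαβ) (η' := deriv η)
    (fun x hx => ((hη.differentiableOn (by norm_num)).differentiableAt
      (isOpen_Ioo.mem_nhds (hsub hx))).hasDerivAt)
    (fun x hx => ((hη'.differentiableOn one_ne_zero).differentiableAt
      (isOpen_Ioo.mem_nhds (hsub hx))).hasDerivAt)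
    (fun x hx => hη_pos x (hsub hx)) (fun x hx => ?_)
  exact le_neg_div_mul_of_le_neg_mul_div hl (hc_pos x (hsub hx)) (hη_pos x (hsub hx))
    (csInf_le hbdd (mem_image_of_mem _ (hsub hx)))
    (hD (Ioo_subset_Ioo_right (min_le_left _ _) hx))

theorem stmt6_general (α β : ℝ) (hαβ : α < β) (c : ℝ → ℝ)
    (hc_pos : ∀ x ∈ Ioo α β, 0 < c x)
    (hlim : Tendsto (fun x => (x - α) ^ 2 / c x) (nhdsWithin α (Ioi α)) atTop) :
    sSup {l : ℝ | ∃ η : ℝ → ℝ, (∀ x ∈ Ioo α β, 0 < η x) ∧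
        ContDiffOn ℝ 2 η (Ioo α β) ∧
        l = sInf ((fun x => -c x * deriv (deriv η) x / (2 * η x)) '' Ioo α β)} = 0 := by
  refine IsGreatest.csSup_eq ⟨⟨fun _ => 1, fun _ _ => one_pos, contDiffOn_const, ?_⟩, ?_⟩
  · simp [(nonempty_Ioo.2 hαβ).image_const]
  · rintro l ⟨η, hη_pos, hη, rfl⟩
    exact sInf_image_le_zero hαβ hc_pos hlim hη_pos hη

theorem stmt6 (α β : ℝ) (hαβ : α < β) (c : ℝ → ℝ)
    (hc_pos : ∀ x ∈ Ioo α β, 0 < c x) (hc_cont : ContinuousOn c (Ioo α β))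
    (hlim : Tendsto (fun x => (x - α) ^ 2 / c x) (nhdsWithin α (Ioi α)) atTop) :
    sSup {l : ℝ | ∃ η : ℝ → ℝ, (∀ x ∈ Ioo α β, 0 < η x) ∧
        ContDiffOn ℝ 2 η (Ioo α β) ∧
        l = sInf ((fun x => -c x * deriv (deriv η) x / (2 * η x)) '' Ioo α β)} = 0 :=
  stmt6_general α β hαβ c hc_pos hlim
end

section
/- Let $(\alpha,\beta)$ be a bounded interval, $\lambda>0$, and let $\eta\in C^2(\alpha,\beta)$, $\eta>0$, satisfy $\frac{1}{2}c(x)\eta''(x) = -\lambda\eta(x)$ with $c>0$ continuous, $\lim_{x\downarrow\alpha}\eta(x)=0=\lim_{x\uparrow\beta}\eta(x)$, and $\int_\alpha^\beta \frac{\eta(x)^2}{c(x)}dx<\infty$. Then $\liminf_{x\downarrow\alpha}\eta(x)\eta'(x) = 0$ and, for a point $x_0$ with $\eta'(x_0)=0$, $\int_\alpha^{x_0}\eta'(y)^2\,dy < \infty$. -/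
open Set Filter MeasureTheory Asymptotics
open scoped Topology

/-!
Multiplying the equation by `η` gives `(η η')' = η'² - 2λη²/c`. Since `η` is concave, `η' ≥ 0` on
`(α, x₀]`, so `η η' ≥ 0` there, and integrating from `x` to `x₀` bounds `∫ₓ^{x₀} η'²` by
`2λ ∫ η²/c` uniformly in `x`. Hence `η'²` is integrable, so is `(η η')'`, and `η η'` has a limit
`I` at `α`. If `I ≠ 0`, then `(log η)' = η'²/(η η')` is integrable near `α`, which is impossible
since `log η → -∞` there.
-/

theorem integrableOn_Ioc_of_forall_intervalIntegral_le {f : ℝ → ℝ} {a b M : ℝ}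
    (hf₀ : ∀ t ∈ Ioc a b, 0 ≤ f t) (hfi : ∀ x ∈ Ioo a b, IntegrableOn f (Ioc x b))
    (hM : ∀ x ∈ Ioo a b, ∫ t in x..b, f t ≤ M) : IntegrableOn f (Ioc a b) := by
  rcases lt_or_ge a b with hab | hba
  · obtain ⟨u, -, hu, hu_lim⟩ := exists_seq_strictAnti_tendsto' hab
    refine integrableOn_Ioc_of_intervalIntegral_norm_bounded_left (I := M) (fun n => hfi _ (hu n))
      hu_lim (Eventually.of_forall fun n => ?_)
    have hsub : Ioc (u n) b ⊆ Ioc a b := Ioc_subset_Ioc_left (hu n).1.le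
    calc ∫ t in Ioc (u n) b, ‖f t‖ = ∫ t in u n..b, f t := by
          rw [intervalIntegral.integral_of_le (hu n).2.le]
          refine setIntegral_congr_fun measurableSet_Ioc fun t ht => ?_
          exact Real.norm_of_nonneg (hf₀ t (hsub ht))
      _ ≤ M := hM _ (hu n)
  · simp [Ioc_eq_empty_of_le hba]

theorem integrableOn_Ioc_of_hasDerivAt_sub {F u h : ℝ → ℝ} {a b : ℝ}
    (hF : ∀ t ∈ Ioc a b, HasDerivAt F (u t - h t) t) (hF₀ : ∀ t ∈ Ioc a b, 0 ≤ F t)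
    (hu : ContinuousOn u (Ioc a b)) (hu₀ : ∀ t ∈ Ioc a b, 0 ≤ u t)
    (hh : IntegrableOn h (Ioc a b)) (hh₀ : ∀ t ∈ Ioc a b, 0 ≤ h t) :
    IntegrableOn u (Ioc a b) := by
  have hIcc : ∀ x ∈ Ioo a b, Icc x b ⊆ Ioc a b := fun x hx =>
    (Icc_subset_Ioc_iff hx.2.le).2 ⟨hx.1, le_rfl⟩
  have hu_int : ∀ x ∈ Ioo a b, IntegrableOn u (Ioc x b) := fun x hx =>
    ((hu.mono (hIcc x hx)).integrableOn_Icc).mono_set Ioc_subset_Icc_self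
  refine integrableOn_Ioc_of_forall_intervalIntegral_le hu₀ hu_int
    (M := F b + ∫ t in Ioc a b, h t) fun x hx => ?_
  have hh_int : IntervalIntegrable h volume x b :=
    (intervalIntegrable_iff_integrableOn_Ioc_of_le hx.2.le).2
      (hh.mono_set (Ioc_subset_Ioc_left hx.1.le))
  have hu_ii : IntervalIntegrable u volume x b :=
    (intervalIntegrable_iff_integrableOn_Ioc_of_le hx.2.le).2 (hu_int x hx)
  have hFTC : ∫ t in x..b, (u t - h t) = F b - F x :=
    intervalIntegral.integral_eq_sub_of_hasDerivAt
      (fun t ht => hF t (hIcc x hx (uIcc_of_le hx.2.le ▸ ht))) (hu_ii.sub hh_int)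
  have hh_le : ∫ t in x..b, h t ≤ ∫ t in Ioc a b, h t := by
    rw [intervalIntegral.integral_of_le hx.2.le]
    exact setIntegral_mono_set hh (ae_restrict_of_forall_mem measurableSet_Ioc hh₀)
      (Ioc_subset_Ioc_left hx.1.le).eventuallyLE
  rw [intervalIntegral.integral_sub hu_ii hh_int] at hFTC
  linarith [hF₀ x (Ioo_subset_Ioc_self hx)]

theorem tendsto_nhdsGT_of_hasDerivAt_of_integrableOn {F f : ℝ → ℝ} {a b : ℝ} (hab : a < b)
    (hF : ∀ t ∈ Ioc a b, HasDerivAt F (f t) t) (hf : IntegrableOn f (Ioc a b)) :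
    Tendsto F (𝓝[>] a) (𝓝 (F b - ∫ t in a..b, f t)) := by
  have hFTC : ∀ x ∈ Ioc a b, F x = F b - ∫ t in x..b, f t := by
    intro x hx
    have hsub : uIcc x b ⊆ Ioc a b := by
      rw [uIcc_of_le hx.2]; exact Icc_subset_Ioc_iff hx.2 |>.2 ⟨hx.1, le_rfl⟩
    rw [intervalIntegral.integral_eq_sub_of_hasDerivAt (fun t ht => hF t (hsub ht))
      ((intervalIntegrable_iff_integrableOn_Ioc_of_le hx.2).2
        (hf.mono_set (Ioc_subset_Ioc_left hx.1.le)))]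
    ring
  have hcont : ContinuousWithinAt (fun x => ∫ t in x..b, f t) (Icc a b) a := by
    have := intervalIntegral.continuousOn_primitive_interval_left (a := a) (b := b) (μ := volume)
      (f := f) (by rwa [uIcc_of_le hab.le, integrableOn_Icc_iff_integrableOn_Ioc])
    rw [uIcc_of_le hab.le] at this
    exact this a (left_mem_Icc.2 hab.le)
  have hlim : Tendsto (fun x => F b - ∫ t in x..b, f t) (𝓝[>] a) (𝓝 (F b - ∫ t in a..b, f t)) := by
    refine tendsto_const_nhds.sub (hcont.tendsto.mono_left ?_)
    rw [← nhdsWithin_Ioc_eq_nhdsGT hab]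
    exact nhdsWithin_mono _ Ioc_subset_Icc_self
  refine hlim.congr' ?_
  filter_upwards [Ioc_mem_nhdsGT hab] with x hx using (hFTC x hx).symm

theorem eq_zero_of_tendsto_mul_deriv {η η' : ℝ → ℝ} {a b I : ℝ} (hab : a < b)
    (hη : ∀ t ∈ Ioo a b, HasDerivAt η (η' t) t) (hη₀ : ∀ t ∈ Ioo a b, 0 < η t)
    (hlim : Tendsto η (𝓝[>] a) (𝓝 0))
    (hI : Tendsto (fun x => η x * η' x) (𝓝[>] a) (𝓝 I))
    (hint : IntegrableOn (fun t => η' t ^ 2) (Ioo a b)) : I = 0 := by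
  by_contra hI0
  have hmem : ∀ᶠ x in 𝓝[>] a, x ∈ Ioo a b := Ioo_mem_nhdsGT hab
  refine not_integrableOn_of_tendsto_norm_atTop_of_deriv_isBigO_filter (f := fun x => Real.log (η x))
    (𝓝[>] a) (Ioo_mem_nhdsGT hab) ?_ ?_ ?_ hint
  · filter_upwards [hmem] with x hx
    exact ((hη x hx).log (hη₀ x hx).ne').differentiableAt
  · have hη_lim : Tendsto η (𝓝[>] a) (𝓝[>] 0) :=
      tendsto_nhdsWithin_iff.2 ⟨hlim, by filter_upwards [hmem] with x hx using hη₀ x hx⟩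
    exact tendsto_abs_atBot_atTop.comp (Real.tendsto_log_nhdsGT_zero.comp hη_lim)
  · have hderiv : deriv (fun x => Real.log (η x)) =ᶠ[𝓝[>] a]
        fun x => (η x * η' x)⁻¹ * η' x ^ 2 := by
      filter_upwards [hmem] with x hx
      rw [((hη x hx).log (hη₀ x hx).ne').deriv]
      have hηx := (hη₀ x hx).ne'
      by_cases h' : η' x = 0
      · simp [h']
      · field_simp
    refine hderiv.trans_isBigO ?_
    simpa using ((hI.inv₀ hI0).isBigO_one ℝ).mul (isBigO_refl (fun t => η' t ^ 2) _)

theorem antitoneOn_of_ode {a b lam : ℝ} {c η η' η'' : ℝ → ℝ} (hlam : 0 < lam)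
    (hc : ∀ x ∈ Ioo a b, 0 < c x) (hη'' : ∀ x ∈ Ioo a b, HasDerivAt η' (η'' x) x)
    (hη : ∀ x ∈ Ioo a b, 0 < η x) (hode : ∀ x ∈ Ioo a b, (1 / 2) * c x * η'' x = -lam * η x) :
    AntitoneOn η' (Ioo a b) := by
  refine antitoneOn_of_hasDerivWithinAt_nonpos (f' := η'') (convex_Ioo a b)
    (fun x hx => (hη'' x hx).continuousAt.continuousWithinAt) (fun x hx => ?_) fun x hx => ?_
  · exact (hη'' x (interior_subset hx)).hasDerivWithinAt
  · rw [interior_Ioo] at hx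
    nlinarith [hode x hx, mul_pos hlam (hη x hx), hc x hx]

theorem hasDerivAt_mul_deriv_of_ode {lam t : ℝ} {c η η' η'' : ℝ → ℝ}
    (hη' : HasDerivAt η (η' t) t) (hη'' : HasDerivAt η' (η'' t) t) (hc : c t ≠ 0)
    (hode : (1 / 2) * c t * η'' t = -lam * η t) :
    HasDerivAt (fun x => η x * η' x) (η' t ^ 2 - 2 * lam * η t ^ 2 / c t) t := by
  refine (hη'.mul hη'').congr_deriv ?_
  have hη''_eq : η'' t = -(2 * lam * η t) / c t := by
    field_simp
    linarith
  rw [hη''_eq]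
  ring

theorem stmt7_general (α β : ℝ) (lam : ℝ) (hlam : 0 < lam)
    (c η η' η'' : ℝ → ℝ)
    (hc_pos : ∀ x ∈ Ioo α β, 0 < c x)
    (hη' : ∀ x ∈ Ioo α β, HasDerivAt η (η' x) x)
    (hη'' : ∀ x ∈ Ioo α β, HasDerivAt η' (η'' x) x)
    (hη_pos : ∀ x ∈ Ioo α β, 0 < η x)
    (hode : ∀ x ∈ Ioo α β, (1 / 2) * c x * η'' x = -lam * η x)
    (hlimα : Tendsto η (nhdsWithin α (Ioi α)) (nhds 0))
    (hint : IntegrableOn (fun x => η x ^ 2 / c x) (Ioo α β))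
    (x₀ : ℝ) (hx₀ : x₀ ∈ Ioo α β) (hcrit : η' x₀ = 0) :
    liminf (fun x => η x * η' x) (nhdsWithin α (Ioi α)) = 0 ∧
      IntegrableOn (fun y => η' y ^ 2) (Ioo α x₀) := by
  obtain ⟨hαx₀, hx₀β⟩ := hx₀
  have hIoc : Ioc α x₀ ⊆ Ioo α β := Ioc_subset_Ioo_right hx₀β
  have hIoo : Ioo α x₀ ⊆ Ioo α β := Ioo_subset_Ioo_right hx₀β.le
  have hη'_anti : AntitoneOn η' (Ioo α β) :=
    antitoneOn_of_ode hlam hc_pos hη'' hη_pos hode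
  have hη'_nonneg : ∀ t ∈ Ioc α x₀, 0 ≤ η' t := fun t ht =>
    hcrit ▸ hη'_anti (hIoc ht) ⟨hαx₀, hx₀β⟩ ht.2
  have hF : ∀ t ∈ Ioc α x₀, HasDerivAt (fun x => η x * η' x)
      (η' t ^ 2 - 2 * lam * η t ^ 2 / c t) t := fun t ht =>
    hasDerivAt_mul_deriv_of_ode (hη' t (hIoc ht)) (hη'' t (hIoc ht)) (hc_pos t (hIoc ht)).ne'
      (hode t (hIoc ht))
  have hh : IntegrableOn (fun t => 2 * lam * η t ^ 2 / c t) (Ioc α x₀) := by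
    rw [integrableOn_Ioc_iff_integrableOn_Ioo]
    simp_rw [mul_div_assoc]
    exact (hint.mono_set hIoo).const_mul (2 * lam)
  have hsq : IntegrableOn (fun t => η' t ^ 2) (Ioc α x₀) :=
    integrableOn_Ioc_of_hasDerivAt_sub hF
      (fun t ht => mul_nonneg (hη_pos t (hIoc ht)).le (hη'_nonneg t ht))
      (fun t ht => ((hη'' t (hIoc ht)).continuousAt.pow 2).continuousWithinAt)
      (fun t _ => sq_nonneg _) hh
      (fun t ht => div_nonneg (by positivity) (hc_pos t (hIoc ht)).le)
  have hlim := tendsto_nhdsGT_of_hasDerivAt_of_integrableOn hαx₀ hF (hsq.sub hh)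
  refine ⟨?_, hsq.mono_set Ioo_subset_Ioc_self⟩
  rw [hlim.liminf_eq]
  exact eq_zero_of_tendsto_mul_deriv hαx₀ (fun t ht => hη' t (hIoo ht))
    (fun t ht => hη_pos t (hIoo ht)) hlimα hlim (hsq.mono_set Ioo_subset_Ioc_self)

theorem stmt7 (α β : ℝ) (hαβ : α < β) (lam : ℝ) (hlam : 0 < lam)
    (c η η' η'' : ℝ → ℝ)
    (hc_pos : ∀ x ∈ Ioo α β, 0 < c x) (hc_cont : ContinuousOn c (Ioo α β))
    (hη' : ∀ x ∈ Ioo α β, HasDerivAt η (η' x) x)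
    (hη'' : ∀ x ∈ Ioo α β, HasDerivAt η' (η'' x) x)
    (hη_pos : ∀ x ∈ Ioo α β, 0 < η x)
    (hode : ∀ x ∈ Ioo α β, (1 / 2) * c x * η'' x = -lam * η x)
    (hlimα : Tendsto η (nhdsWithin α (Ioi α)) (nhds 0))
    (hlimβ : Tendsto η (nhdsWithin β (Iio β)) (nhds 0))
    (hint : IntegrableOn (fun x => η x ^ 2 / c x) (Ioo α β))
    (x₀ : ℝ) (hx₀ : x₀ ∈ Ioo α β) (hcrit : η' x₀ = 0) :
    liminf (fun x => η x * η' x) (nhdsWithin α (Ioi α)) = 0 ∧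
      IntegrableOn (fun y => η' y ^ 2) (Ioo α x₀) :=
  stmt7_general α β lam hlam c η η' η'' hc_pos hη' hη'' hη_pos hode hlimα hint x₀ hx₀ hcrit
end
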